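/- Let R > 0 and let ω : ℝ² → ℝ be twice continuously differentiable on the closed Euclidean disk B(R) of radius R centered at the origin, satisfying the hyperbolic Monge–Ampère equation (∂²ω/∂u²)(∂²ω/∂v²) − (∂²ω/∂u∂v)² = −1 at every point of B(R). Then ∫_{B(R)} ‖D²ω‖² du dv ≥ 2π R², where ‖D²ω‖² is the squared Frobenius norm of the Hessian. Moreover, equality is attained by the two-wave saddle ω(u, v) = (1/2)(u² − v²); hence this saddle is a global minimizer of the bending energy over all solutions of the Monge–Ampère equation on B(R). -/

import Mathlib

open Real

/-- Second partial derivative `∂²ω/∂u²`. -/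
noncomputable def puu (ω : ℝ → ℝ → ℝ) (u v : ℝ) : ℝ := deriv (deriv (fun u' => ω u' v)) u

/-- Second partial derivative `∂²ω/∂v²`. -/
noncomputable def pvv (ω : ℝ → ℝ → ℝ) (u v : ℝ) : ℝ := deriv (deriv (fun v' => ω u v')) v

/-- Mixed partial derivative `∂²ω/∂u∂v`. -/
noncomputable def puv (ω : ℝ → ℝ → ℝ) (u v : ℝ) : ℝ :=
  deriv (fun v' => deriv (fun u' => ω u' v') u) v

/-- The closed Euclidean disk of radius `R` centered at the origin in `ℝ²`. -/
def closedEuclDisk (R : ℝ) : Set (ℝ × ℝ) := {p : ℝ × ℝ | p.1 ^ 2 + p.2 ^ 2 ≤ R ^ 2}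

/-- The small-slopes bending energy `∫_{B(R)} ‖D²ω‖² du dv` (squared Frobenius norm of the
Hessian). -/
noncomputable def bendE (R : ℝ) (ω : ℝ → ℝ → ℝ) : ℝ :=
  ∫ p in closedEuclDisk R, (puu ω p.1 p.2 ^ 2 + 2 * puv ω p.1 p.2 ^ 2 + pvv ω p.1 p.2 ^ 2)

/-- The two-wave saddle `ω(u,v) = (u² − v²)/2`. -/
noncomputable def saddle : ℝ → ℝ → ℝ := fun u v => (u ^ 2 - v ^ 2) / 2

/-!
Where the Hessian has determinant `-1`, the identity
`ω_uu² + 2 ω_uv² + ω_vv² = (ω_uu + ω_vv)² - 2 (ω_uu ω_vv - ω_uv²)` gives `‖D²ω‖² = (Δω)² + 2 ≥ 2`,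
so the bending energy is at least twice the area `πR²` of the disk; the saddle is harmonic, so
equality holds for it. The analytic point is that the energy density is integrable: inside the
disk the partial derivatives are entries of the second derivative, which extends continuously to
the compact closed disk, while the boundary circle is a null set.
-/

open MeasureTheory Metric Filter Topology Function

lemma closedEuclDisk_eq_preimage (R : ℝ) :
    closedEuclDisk R = Complex.equivRealProdCLM.symm ⁻¹' closedBall 0 |R| := by
  ext p
  rw [Set.mem_preimage, mem_closedBall_zero_iff, ← abs_norm, ← sq_le_sq, Complex.sq_norm,
    Complex.normSq_apply]
  simp [closedEuclDisk, sq]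

lemma convex_closedEuclDisk (R : ℝ) : Convex ℝ (closedEuclDisk R) := by
  rw [closedEuclDisk_eq_preimage]
  exact (convex_closedBall 0 |R|).linear_preimage Complex.equivRealProdCLM.symm.toLinearMap

lemma isCompact_closedEuclDisk (R : ℝ) : IsCompact (closedEuclDisk R) := by
  rw [closedEuclDisk_eq_preimage]
  exact Complex.equivRealProdCLM.symm.toHomeomorph.isCompact_preimage.2
    (isCompact_closedBall 0 |R|)

lemma zero_mem_interior_closedEuclDisk {R : ℝ} (hR : 0 < R) :
    (0 : ℝ × ℝ) ∈ interior (closedEuclDisk R) := by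
  rw [closedEuclDisk_eq_preimage, mem_interior_iff_mem_nhds]
  refine Complex.equivRealProdCLM.symm.continuous.continuousAt.preimage_mem_nhds ?_
  simpa using closedBall_mem_nhds (0 : ℂ) (abs_pos.2 hR.ne')

lemma measureReal_closedEuclDisk {R : ℝ} (hR : 0 ≤ R) :
    volume.real (closedEuclDisk R) = π * R ^ 2 := by
  have h : volume (Complex.equivRealProdCLM.symm ⁻¹' closedBall 0 |R|) =
      volume (closedBall (0 : ℂ) |R|) :=
    Complex.volume_preserving_equiv_real_prod.symm.measure_preimage_equiv _
  rw [measureReal_def, closedEuclDisk_eq_preimage, h]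
  simp [abs_of_nonneg hR, hR, mul_comm]

section Slices

variable {F : Type*} [NormedAddCommGroup F] [NormedSpace ℝ F] {f : ℝ × ℝ → F}
  {f' : ℝ × ℝ →L[ℝ] F} {u v : ℝ}

lemma HasFDerivAt.hasDerivAt_fst_slice (hf : HasFDerivAt f f' (u, v)) :
    HasDerivAt (fun u' => f (u', v)) (f' (1, 0)) u :=
  hf.comp_hasDerivAt u ((hasDerivAt_id u).prodMk (hasDerivAt_const u v))

lemma HasFDerivAt.hasDerivAt_snd_slice (hf : HasFDerivAt f f' (u, v)) :
    HasDerivAt (fun v' => f (u, v')) (f' (0, 1)) v :=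
  hf.comp_hasDerivAt v ((hasDerivAt_const v u).prodMk (hasDerivAt_id v))

end Slices

section ContDiffTwo

variable {𝕜 E F : Type*} [NontriviallyNormedField 𝕜] [NormedAddCommGroup E] [NormedSpace 𝕜 E]
  [NormedAddCommGroup F] [NormedSpace 𝕜 F] {f : E → F} {x : E}

lemma ContDiffAt.eventually_differentiableAt (hf : ContDiffAt 𝕜 2 f x) :
    ∀ᶠ y in 𝓝 x, DifferentiableAt 𝕜 f y :=
  (hf.eventually (by simp)).mono fun _ hy => hy.differentiableAt two_ne_zero

lemma ContDiffAt.hasFDerivAt_fderiv (hf : ContDiffAt 𝕜 2 f x) :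
    HasFDerivAt (fderiv 𝕜 f) (fderiv 𝕜 (fderiv 𝕜 f) x) x :=
  ((hf.fderiv_right (m := 1) le_rfl).differentiableAt one_ne_zero).hasFDerivAt

end ContDiffTwo

section SecondPartials

variable {ω : ℝ → ℝ → ℝ} {u v : ℝ}

lemma puu_eq_iteratedFDeriv (hω : ContDiffAt ℝ 2 (uncurry ω) (u, v)) :
    puu ω u v = iteratedFDeriv ℝ 2 (uncurry ω) (u, v) ![(1, 0), (1, 0)] := by
  have hslice : deriv (fun u' => ω u' v) =ᶠ[𝓝 u]
      fun u' => fderiv ℝ (uncurry ω) (u', v) (1, 0) := by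
    filter_upwards [(Continuous.prodMk_left v).continuousAt.eventually
      hω.eventually_differentiableAt] with u' hu'
    exact hu'.hasFDerivAt.hasDerivAt_fst_slice.deriv
  rw [puu, hslice.deriv_eq, iteratedFDeriv_two_apply]
  simpa using (hω.hasFDerivAt_fderiv.hasDerivAt_fst_slice.clm_apply
    (hasDerivAt_const u ((1, 0) : ℝ × ℝ))).deriv

lemma puv_eq_iteratedFDeriv (hω : ContDiffAt ℝ 2 (uncurry ω) (u, v)) :
    puv ω u v = iteratedFDeriv ℝ 2 (uncurry ω) (u, v) ![(0, 1), (1, 0)] := by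
  have hslice : (fun v' => deriv (fun u' => ω u' v') u) =ᶠ[𝓝 v]
      fun v' => fderiv ℝ (uncurry ω) (u, v') (1, 0) := by
    filter_upwards [(Continuous.prodMk_right u).continuousAt.eventually
      hω.eventually_differentiableAt] with v' hv'
    exact hv'.hasFDerivAt.hasDerivAt_fst_slice.deriv
  rw [puv, hslice.deriv_eq, iteratedFDeriv_two_apply]
  simpa using (hω.hasFDerivAt_fderiv.hasDerivAt_snd_slice.clm_apply
    (hasDerivAt_const v ((1, 0) : ℝ × ℝ))).deriv

lemma pvv_eq_iteratedFDeriv (hω : ContDiffAt ℝ 2 (uncurry ω) (u, v)) :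
    pvv ω u v = iteratedFDeriv ℝ 2 (uncurry ω) (u, v) ![(0, 1), (0, 1)] := by
  have hslice : deriv (fun v' => ω u v') =ᶠ[𝓝 v]
      fun v' => fderiv ℝ (uncurry ω) (u, v') (0, 1) := by
    filter_upwards [(Continuous.prodMk_right u).continuousAt.eventually
      hω.eventually_differentiableAt] with v' hv'
    exact hv'.hasFDerivAt.hasDerivAt_snd_slice.deriv
  rw [pvv, hslice.deriv_eq, iteratedFDeriv_two_apply]
  simpa using (hω.hasFDerivAt_fderiv.hasDerivAt_snd_slice.clm_apply
    (hasDerivAt_const v ((0, 1) : ℝ × ℝ))).deriv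

end SecondPartials

noncomputable def bendingDensity (ω : ℝ → ℝ → ℝ) (p : ℝ × ℝ) : ℝ :=
  puu ω p.1 p.2 ^ 2 + 2 * puv ω p.1 p.2 ^ 2 + pvv ω p.1 p.2 ^ 2

def hessianNormSq (A : (ℝ × ℝ) [×2]→L[ℝ] ℝ) : ℝ :=
  A ![(1, 0), (1, 0)] ^ 2 + 2 * A ![(0, 1), (1, 0)] ^ 2 + A ![(0, 1), (0, 1)] ^ 2

lemma continuous_hessianNormSq : Continuous hessianNormSq := by
  unfold hessianNormSq
  fun_prop

lemma bendingDensity_eq_hessianNormSq {ω : ℝ → ℝ → ℝ} {p : ℝ × ℝ}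
    (hω : ContDiffAt ℝ 2 (uncurry ω) p) :
    bendingDensity ω p = hessianNormSq (iteratedFDeriv ℝ 2 (uncurry ω) p) := by
  rw [bendingDensity, hessianNormSq, puu_eq_iteratedFDeriv hω, puv_eq_iteratedFDeriv hω,
    pvv_eq_iteratedFDeriv hω]

lemma two_le_bendingDensity {ω : ℝ → ℝ → ℝ} {p : ℝ × ℝ}
    (h : puu ω p.1 p.2 * pvv ω p.1 p.2 - puv ω p.1 p.2 ^ 2 = -1) :
    2 ≤ bendingDensity ω p :=
  calc 2 ≤ (puu ω p.1 p.2 + pvv ω p.1 p.2) ^ 2 + 2 := le_add_of_nonneg_left (sq_nonneg _)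
    _ = bendingDensity ω p := by rw [bendingDensity]; linear_combination 2 * h

lemma integrableOn_interior_bendingDensity {ω : ℝ → ℝ → ℝ} {K : Set (ℝ × ℝ)}
    (hK : IsCompact K) (hK' : UniqueDiffOn ℝ K) (hω : ContDiffOn ℝ 2 (uncurry ω) K) :
    IntegrableOn (bendingDensity ω) (interior K) := by
  have hcont :
      ContinuousOn (fun p => hessianNormSq (iteratedFDerivWithin ℝ 2 (uncurry ω) K p)) K :=
    continuous_hessianNormSq.comp_continuousOn (hω.continuousOn_iteratedFDerivWithin le_rfl hK')
  refine ((hcont.integrableOn_compact hK).mono_set interior_subset).congr_fun (fun p hp => ?_)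
    isOpen_interior.measurableSet
  have hωp : ContDiffAt ℝ 2 (uncurry ω) p := hω.contDiffAt (mem_interior_iff_mem_nhds.1 hp)
  rw [bendingDensity_eq_hessianNormSq hωp]
  exact congrArg hessianNormSq
    (iteratedFDerivWithin_eq_iteratedFDeriv hK' hωp (interior_subset hp))

theorem two_mul_measureReal_le_setIntegral_bendingDensity {ω : ℝ → ℝ → ℝ} {K : Set (ℝ × ℝ)}
    (hK : IsCompact K) (hKconv : Convex ℝ K) (hKint : (interior K).Nonempty)
    (hω : ContDiffOn ℝ 2 (uncurry ω) K)
    (hMA : ∀ p ∈ K, puu ω p.1 p.2 * pvv ω p.1 p.2 - puv ω p.1 p.2 ^ 2 = -1) :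
    2 * volume.real K ≤ ∫ p in K, bendingDensity ω p := by
  have hae : interior K =ᵐ[volume] K :=
    interior_ae_eq_of_null_frontier (hKconv.addHaar_frontier volume)
  rw [← measureReal_congr hae, ← setIntegral_congr_set hae]
  exact setIntegral_ge_of_const_le_real isOpen_interior.measurableSet
    (measure_mono interior_subset |>.trans_lt hK.measure_lt_top).ne
    (fun p hp => two_le_bendingDensity (hMA p (interior_subset hp)))
    (integrableOn_interior_bendingDensity hK (uniqueDiffOn_convex hKconv hKint) hω)

lemma puu_saddle (u v : ℝ) : puu saddle u v = 1 := by
  have h : deriv (fun u' => saddle u' v) = fun u' => u' := funext fun _ => by simp [saddle]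
  simp [puu, h]

lemma puv_saddle (u v : ℝ) : puv saddle u v = 0 := by
  have h : (fun v' => deriv (fun u' => saddle u' v') u) = fun _ => u :=
    funext fun _ => by simp [saddle]
  simp [puv, h]

lemma pvv_saddle (u v : ℝ) : pvv saddle u v = -1 := by
  have h : deriv (fun v' => saddle u v') = fun v' => -v' :=
    funext fun _ => by simp [saddle, neg_div]
  simp [pvv, h]

lemma mongeAmpere_saddle (u v : ℝ) :
    puu saddle u v * pvv saddle u v - puv saddle u v ^ 2 = -1 := by
  rw [puu_saddle, puv_saddle, pvv_saddle]
  norm_num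

lemma bendE_saddle {R : ℝ} (hR : 0 ≤ R) : bendE R saddle = 2 * π * R ^ 2 := by
  have h : ∀ p : ℝ × ℝ, bendingDensity saddle p = 2 := fun p => by
    rw [bendingDensity, puu_saddle, puv_saddle, pvv_saddle]
    norm_num
  change ∫ p in closedEuclDisk R, bendingDensity saddle p = _
  rw [funext h, setIntegral_const, measureReal_closedEuclDisk hR, smul_eq_mul]
  ring

/-- Any `C²` solution of the hyperbolic Monge–Ampère equation `ω_{uu}ω_{vv} − ω_{uv}² = −1`
on the disk of radius `R` has bending energy at least `2πR²`, and this value is attained by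
the two-wave saddle `(u² − v²)/2`, which is therefore a global minimizer. -/
theorem saddle_minimizes_bending (R : ℝ) (hR : 0 < R) :
    (∀ ω : ℝ → ℝ → ℝ,
      ContDiffOn ℝ 2 (fun p : ℝ × ℝ => ω p.1 p.2) (closedEuclDisk R) →
      (∀ p ∈ closedEuclDisk R,
        puu ω p.1 p.2 * pvv ω p.1 p.2 - puv ω p.1 p.2 ^ 2 = -1) →
      2 * π * R ^ 2 ≤ bendE R ω) ∧
    (∀ u v : ℝ, puu saddle u v * pvv saddle u v - puv saddle u v ^ 2 = -1) ∧
    bendE R saddle = 2 * π * R ^ 2 := by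
  refine ⟨fun ω hω hMA => ?_, mongeAmpere_saddle, bendE_saddle hR.le⟩
  calc 2 * π * R ^ 2 = 2 * volume.real (closedEuclDisk R) := by
        rw [measureReal_closedEuclDisk hR.le]; ring
    _ ≤ bendE R ω :=
        two_mul_measureReal_le_setIntegral_bendingDensity (isCompact_closedEuclDisk R)
          (convex_closedEuclDisk R) ⟨0, zero_mem_interior_closedEuclDisk hR⟩ hω hMA
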